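/- Let ρ > 0, m ∈ ℝⁿ, U ∈ Sym₀ⁿ, q ∈ ℝ, and suppose λ_max((m⊗m)/ρ − U) ≤ χ/n, |m|² = ρχ, and q = p(ρ) + χ/n for some χ > 0. Then U = (m⊗m)/ρ − (|m|²/(nρ))Iₙ, i.e., (m, U, q) belongs to the constraint set K_{ρ,χ}. -/

import Mathlib

open Matrix

noncomputable def lambdaMax {n : ℕ} (S : Matrix (Fin n) (Fin n) ℝ) : ℝ :=
  sSup {r : ℝ | ∃ v : Fin n → ℝ, (∑ i, v i ^ 2) = 1 ∧ r = v ⬝ᵥ S.mulVec v}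

/-!
Write `S = (m ⊗ m)/ρ - U`. The bound `λ_max S ≤ χ/n` says that `(χ/n) I - S` is positive
semidefinite, while `tr U = 0` and `|m|² = ρχ` give `tr ((χ/n) I - S) = χ - χ = 0`.
A positive semidefinite matrix with zero trace vanishes, so `S = (χ/n) I`, which is the claim.
-/

lemma abs_le_one_of_sum_sq_eq_one {ι : Type*} [Fintype ι] {v : ι → ℝ} (hv : ∑ i, v i ^ 2 = 1)
    (i : ι) : |v i| ≤ 1 := by
  have hi : v i ^ 2 ≤ 1 := hv ▸ Finset.single_le_sum (fun j _ ↦ sq_nonneg (v j)) (Finset.mem_univ i)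
  exact (sq_le_one_iff_abs_le_one (v i)).mp hi

lemma dotProduct_mulVec_le_sum_abs {ι : Type*} [Fintype ι] (S : Matrix ι ι ℝ) {v : ι → ℝ}
    (hv : ∑ i, v i ^ 2 = 1) : v ⬝ᵥ S *ᵥ v ≤ ∑ i, ∑ j, |S i j| := by
  have hexpand : v ⬝ᵥ S *ᵥ v = ∑ i, ∑ j, v i * S i j * v j := by
    simp only [dotProduct, mulVec, Finset.mul_sum, mul_assoc]
  rw [hexpand]
  gcongr with i _ j _
  calc v i * S i j * v j ≤ |v i| * |S i j| * |v j| := by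
        rw [← abs_mul, ← abs_mul]; exact le_abs_self _
    _ ≤ 1 * |S i j| * 1 := by
        gcongr
        exacts [abs_le_one_of_sum_sq_eq_one hv i, abs_le_one_of_sum_sq_eq_one hv j]
    _ = |S i j| := by ring

section lambdaMax

variable {n : ℕ}

lemma bddAbove_rayleigh (S : Matrix (Fin n) (Fin n) ℝ) :
    BddAbove {r : ℝ | ∃ v : Fin n → ℝ, (∑ i, v i ^ 2) = 1 ∧ r = v ⬝ᵥ S.mulVec v} := by
  refine ⟨∑ i, ∑ j, |S i j|, ?_⟩
  rintro r ⟨v, hv, rfl⟩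
  exact dotProduct_mulVec_le_sum_abs S hv

lemma dotProduct_mulVec_le_lambdaMax (S : Matrix (Fin n) (Fin n) ℝ) {v : Fin n → ℝ}
    (hv : ∑ i, v i ^ 2 = 1) : v ⬝ᵥ S *ᵥ v ≤ lambdaMax S :=
  le_csSup (bddAbove_rayleigh S) ⟨v, hv, rfl⟩

lemma dotProduct_mulVec_le_of_lambdaMax_le {S : Matrix (Fin n) (Fin n) ℝ} {c : ℝ}
    (h : lambdaMax S ≤ c) (v : Fin n → ℝ) : v ⬝ᵥ S *ᵥ v ≤ c * ∑ i, v i ^ 2 := by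
  set s := ∑ i, v i ^ 2
  obtain hs | hs := (Finset.sum_nonneg fun i _ ↦ sq_nonneg (v i) : 0 ≤ s).eq_or_lt
  · have hv : v = 0 := funext fun i ↦ (Finset.sum_mul_self_eq_zero_iff _ v).mp
      (by simpa only [s, sq] using hs.symm) i (Finset.mem_univ i)
    simp [hv, s]
  set w := (√s)⁻¹ • v
  have hsqrt : √s ^ 2 = s := Real.sq_sqrt hs.le
  have hw : ∑ i, w i ^ 2 = 1 := by
    simp only [w, Pi.smul_apply, smul_eq_mul, mul_pow, ← Finset.mul_sum, inv_pow, hsqrt]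
    exact inv_mul_cancel₀ hs.ne'
  have hvw : v = √s • w := by
    rw [smul_inv_smul₀ (Real.sqrt_pos.mpr hs).ne']
  calc v ⬝ᵥ S *ᵥ v = s * (w ⬝ᵥ S *ᵥ w) := by
        rw [hvw, mulVec_smul, dotProduct_smul, smul_dotProduct, smul_eq_mul, smul_eq_mul,
          ← mul_assoc, ← sq, hsqrt]
    _ ≤ s * c := by gcongr; exact (dotProduct_mulVec_le_lambdaMax S hw).trans h
    _ = c * s := mul_comm s c

lemma posSemidef_smul_one_sub_of_lambdaMax_le {S : Matrix (Fin n) (Fin n) ℝ} (hS : S.IsSymm)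
    {c : ℝ} (h : lambdaMax S ≤ c) : (c • (1 : Matrix (Fin n) (Fin n) ℝ) - S).PosSemidef := by
  refine .of_dotProduct_mulVec_nonneg ?_ fun v ↦ ?_
  · exact isHermitian_iff_isSymm.mpr ((isSymm_one.smul c).sub hS)
  · have hv : v ⬝ᵥ (c • (1 : Matrix (Fin n) (Fin n) ℝ)) *ᵥ v = c * ∑ i, v i ^ 2 := by
      simp [smul_mulVec, dotProduct, Finset.mul_sum, sq, mul_left_comm]
    rw [star_trivial, sub_mulVec, dotProduct_sub, hv, sub_nonneg]
    exact dotProduct_mulVec_le_of_lambdaMax_le h v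

lemma eq_smul_one_of_lambdaMax_le_of_trace_eq {S : Matrix (Fin n) (Fin n) ℝ} (hS : S.IsSymm)
    {c : ℝ} (h : lambdaMax S ≤ c) (htr : S.trace = n * c) :
    S = c • (1 : Matrix (Fin n) (Fin n) ℝ) := by
  have htr0 : (c • (1 : Matrix (Fin n) (Fin n) ℝ) - S).trace = 0 := by
    simp [trace_sub, htr, mul_comm]
  exact (sub_eq_zero.mp ((posSemidef_smul_one_sub_of_lambdaMax_le hS h).trace_eq_zero_iff.mp
    htr0)).symm

end lambdaMax

theorem stmt_15_general {n : ℕ} (hn : 0 < n) (ρ χ : ℝ) (hρ : 0 < ρ)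
    (m : Fin n → ℝ) (U : Matrix (Fin n) (Fin n) ℝ) (hU : U.IsSymm) (hU0 : U.trace = 0)
    (hlam : lambdaMax (ρ⁻¹ • vecMulVec m m - U) ≤ χ / n)
    (hm : (∑ i, m i ^ 2) = ρ * χ) :
    U = ρ⁻¹ • vecMulVec m m
        - ((∑ i, m i ^ 2) / (n * ρ)) • (1 : Matrix (Fin n) (Fin n) ℝ) := by
  have hn0 : (n : ℝ) ≠ 0 := Nat.cast_ne_zero.mpr hn.ne'
  have hmm : m ⬝ᵥ m = ρ * χ := by simpa only [dotProduct, sq] using hm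
  have hsymm : (ρ⁻¹ • vecMulVec m m - U).IsSymm :=
    (IsSymm.smul (transpose_vecMulVec m m) ρ⁻¹).sub hU
  have htr : (ρ⁻¹ • vecMulVec m m - U).trace = n * (χ / n) := by
    rw [trace_sub, trace_smul, trace_vecMulVec, hU0, hmm, smul_eq_mul,
      inv_mul_cancel_left₀ hρ.ne', sub_zero, mul_div_cancel₀ _ hn0]
  have hS := eq_smul_one_of_lambdaMax_le_of_trace_eq hsymm hlam htr
  rw [hm, mul_comm ρ χ, mul_div_mul_right _ _ hρ.ne', ← hS]
  abel

theorem stmt_15 {n : ℕ} (hn : 0 < n) (p : ℝ → ℝ) (ρ χ q : ℝ) (hρ : 0 < ρ) (hχ : 0 < χ)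
    (m : Fin n → ℝ) (U : Matrix (Fin n) (Fin n) ℝ) (hU : U.IsSymm) (hU0 : U.trace = 0)
    (hlam : lambdaMax (ρ⁻¹ • vecMulVec m m - U) ≤ χ / n)
    (hm : (∑ i, m i ^ 2) = ρ * χ)
    (hq : q = p ρ + χ / n) :
    U = ρ⁻¹ • vecMulVec m m
        - ((∑ i, m i ^ 2) / (n * ρ)) • (1 : Matrix (Fin n) (Fin n) ℝ) :=
  stmt_15_general hn ρ χ hρ m U hU hU0 hlam hm
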